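/- arXiv:1910.11312 — 6 statements merged into one kernel-verified Lean document; each statement's English description precedes it below -/
import Mathlib

section
/- Let A = {a ∈ S^{n-1} : P(|a·ε| = 1) = 0} with the subspace topology inherited from S^{n-1}. Then the set C = {a ∈ A : P(|a·ε| > 1) ≤ 1/2} is both open and closed in A. -/
open Finset
open scoped Classical

/-- sign of a Boolean: `true ↦ 1`, `false ↦ -1` (a Rademacher value). -/
noncomputable def rsign (b : Bool) : ℝ := if b then 1 else -1

/-- Probability of an event under the uniform distribution on `{-1,1}^n`. -/
noncomputable def prob (n : ℕ) (E : (Fin n → Bool) → Prop) : ℝ :=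
  ((Finset.univ.filter fun s => E s).card : ℝ) / 2 ^ n

lemma prob_eq_zero_iff (n : ℕ) (E : (Fin n → Bool) → Prop) :
    prob n E = 0 ↔ ∀ s, ¬ E s := by
  unfold prob
  rw [div_eq_zero_iff]
  constructor
  · rintro (h | h)
    · intro s hs
      have : (Finset.univ.filter fun s => E s) = ∅ :=
        Finset.card_eq_zero.mp (by exact_mod_cast h)
      have := Finset.filter_eq_empty_iff.mp this (Finset.mem_univ s)
      exact this hs
    · exact absurd h (by positivity)
  · intro h
    left
    norm_cast
    rw [Finset.card_eq_zero, Finset.filter_eq_empty_iff]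
    exact fun s _ => h s

lemma prob_congr (n : ℕ) (E F : (Fin n → Bool) → Prop) (h : ∀ s, E s ↔ F s) :
    prob n E = prob n F := by
  unfold prob
  congr 2
  apply congrArg
  exact Finset.filter_congr fun s _ => h s

/-- With `A = {a ∈ S^{n-1} : P(|a·ε| = 1) = 0}` carrying the subspace topology,
the set `C = {a ∈ A : P(|a·ε| > 1) ≤ 1/2}` is both open and closed in `A`. -/
theorem stmt_2 (n : ℕ) (hn : 2 ≤ n) :
    IsOpen {a : {a : EuclideanSpace ℝ (Fin n) //
        ‖a‖ = 1 ∧ prob n (fun s => |∑ i, a i * rsign (s i)| = 1) = 0} |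
      prob n (fun s => |∑ i, (a : EuclideanSpace ℝ (Fin n)) i * rsign (s i)| > 1) ≤ 1 / 2} ∧
    IsClosed {a : {a : EuclideanSpace ℝ (Fin n) //
        ‖a‖ = 1 ∧ prob n (fun s => |∑ i, a i * rsign (s i)| = 1) = 0} |
      prob n (fun s => |∑ i, (a : EuclideanSpace ℝ (Fin n)) i * rsign (s i)| > 1) ≤ 1 / 2} := by
  set A := {a : EuclideanSpace ℝ (Fin n) //
      ‖a‖ = 1 ∧ prob n (fun s => |∑ i, a i * rsign (s i)| = 1) = 0} with hA
  -- the abs-sum function for a fixed sign vector s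
  set g : (Fin n → Bool) → A → ℝ :=
    fun s y => |∑ i, (y : EuclideanSpace ℝ (Fin n)) i * rsign (s i)| with hgdef
  have hgcont : ∀ s, Continuous (g s) := by
    intro s
    apply Continuous.abs
    apply continuous_finset_sum
    intro i _
    exact ((EuclideanSpace.proj i).continuous.comp continuous_subtype_val).mul
      continuous_const
  have hne : ∀ (a : A) (s : Fin n → Bool), g s a ≠ 1 := by
    intro a s
    have := (prob_eq_zero_iff n _).mp a.2.2 s
    simpa [hgdef] using this
  have hlc : IsLocallyConstant (fun a : A =>
      prob n (fun s => |∑ i, (a : EuclideanSpace ℝ (Fin n)) i * rsign (s i)| > 1)) := by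
    rw [IsLocallyConstant.iff_exists_open]
    intro a
    refine ⟨⋂ s : Fin n → Bool,
      (if 1 < g s a then {y : A | 1 < g s y} else {y : A | g s y < 1}), ?_, ?_, ?_⟩
    · apply isOpen_iInter_of_finite
      intro s
      split_ifs
      · exact isOpen_lt continuous_const (hgcont s)
      · exact isOpen_lt (hgcont s) continuous_const
    · apply Set.mem_iInter.mpr
      intro s
      split_ifs with h
      · exact h
      · exact lt_of_le_of_ne (not_lt.mp h) (hne a s)
    · intro y hy
      apply prob_congr
      intro s
      have hys := Set.mem_iInter.mp hy s
      constructor <;> intro hlt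
      · by_contra hcon
        rw [if_neg hcon] at hys
        exact absurd hlt (not_lt.mpr (le_of_lt hys))
      · rw [if_pos hlt] at hys
        exact hys
  constructor
  · exact hlc {x | x ≤ 1 / 2}
  · rw [← isOpen_compl_iff]
    exact hlc {x | ¬ x ≤ 1 / 2}
end

section
/- Let a ∈ ℝ^n with a_1 ≥ ... ≥ a_n ≥ 0. Let J, K ⊆ {1,...,n} be disjoint with a·(J)_n ≥ 0 and a·(K)_n ≥ 0. If Σ_{(i,j)∈J^{(2)} ∪ K^{(2)} ∪ ((J∪K)_c)^{(2)}} a_ia_j − Σ_{(i,j)∈J×K} a_ia_j ≥ 0, then a·(J)_n ≥ ‖a‖ or a·(K)_n ≥ ‖a‖. -/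
open Finset

lemma pairsum_aux {n : ℕ} (a : Fin n → ℝ) (s : Finset (Fin n)) :
    2 * (∑ i ∈ s, ∑ j ∈ s, if i < j then a i * a j else 0)
      = (∑ i ∈ s, a i) ^ 2 - ∑ i ∈ s, (a i) ^ 2 := by
  have h1 : (∑ i ∈ s, a i) ^ 2 = ∑ i ∈ s, ∑ j ∈ s, a i * a j := by
    rw [sq, Finset.sum_mul_sum]
  have h3 : (∑ i ∈ s, ∑ j ∈ s, if j < i then a i * a j else 0)
      = ∑ i ∈ s, ∑ j ∈ s, if i < j then a i * a j else 0 := by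
    rw [Finset.sum_comm]
    refine Finset.sum_congr rfl fun i _ => Finset.sum_congr rfl fun j _ => ?_
    by_cases hij : i < j <;> simp [hij, mul_comm]
  have h2 : ∑ i ∈ s, ∑ j ∈ s, a i * a j
      = (∑ i ∈ s, ∑ j ∈ s, if i < j then a i * a j else 0)
        + (∑ i ∈ s, ∑ j ∈ s, if j < i then a i * a j else 0)
        + ∑ i ∈ s, (a i) ^ 2 := by
    have : ∀ i ∈ s, ∑ j ∈ s, a i * a j
        = (∑ j ∈ s, if i < j then a i * a j else 0)
          + (∑ j ∈ s, if j < i then a i * a j else 0)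
          + (a i) ^ 2 := by
      intro i hi
      have hd : (∑ j ∈ s, if j = i then a i * a j else 0) = (a i) ^ 2 := by
        rw [Finset.sum_ite_eq' s i (fun j => a i * a j)]
        simp [hi, sq]
      rw [← hd, ← Finset.sum_add_distrib, ← Finset.sum_add_distrib]
      refine Finset.sum_congr rfl fun j _ => ?_
      rcases lt_trichotomy i j with hlt | heq | hgt
      · simp [hlt, hlt.not_gt, hlt.ne']
      · simp [heq]
      · simp [hgt, hgt.not_gt, hgt.ne]
    rw [← Finset.sum_add_distrib, ← Finset.sum_add_distrib]
    exact Finset.sum_congr rfl this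
  rw [h3] at h2
  rw [h1, h2]; ring

lemma signsum_aux {n : ℕ} (a : Fin n → ℝ) (s : Finset (Fin n)) :
    ∑ i, a i * (if i ∈ s then (-1 : ℝ) else 1)
      = ∑ i, a i - 2 * ∑ i ∈ s, a i := by
  have : ∀ i : Fin n, a i * (if i ∈ s then (-1 : ℝ) else 1)
      = a i - 2 * (if i ∈ s then a i else 0) := by
    intro i; by_cases hi : i ∈ s <;> simp [hi] <;> ring
  rw [Finset.sum_congr rfl fun i _ => this i, Finset.sum_sub_distrib,
    ← Finset.mul_sum, Finset.sum_ite_mem, Finset.univ_inter]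

/-- Lemma 3.2 (ii): with `a_1 ≥ … ≥ a_n ≥ 0`, disjoint `J, K ⊆ {1,…,n}`,
`a·(J)_n ≥ 0` and `a·(K)_n ≥ 0`, if
`∑_{(i,j)∈J^{(2)} ∪ K^{(2)} ∪ ((J∪K)_c)^{(2)}} a_i a_j − ∑_{(i,j)∈J×K} a_i a_j ≥ 0`,
then `a·(J)_n ≥ ‖a‖` or `a·(K)_n ≥ ‖a‖`. -/
theorem stmt_8 (n : ℕ) (a : Fin n → ℝ) (ha : Antitone a) (ha0 : ∀ i, 0 ≤ a i)
    (J K : Finset (Fin n)) (hJK : Disjoint J K)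
    (hJ0 : 0 ≤ ∑ i, a i * (if i ∈ J then (-1 : ℝ) else 1))
    (hK0 : 0 ≤ ∑ i, a i * (if i ∈ K then (-1 : ℝ) else 1))
    (h : 0 ≤ ((∑ i ∈ J, ∑ j ∈ J, if i < j then a i * a j else 0)
          + (∑ i ∈ K, ∑ j ∈ K, if i < j then a i * a j else 0)
          + (∑ i ∈ (J ∪ K)ᶜ, ∑ j ∈ (J ∪ K)ᶜ, if i < j then a i * a j else 0))
        - ∑ i ∈ J, ∑ j ∈ K, a i * a j) :
    (∑ i, a i * (if i ∈ J then (-1 : ℝ) else 1) ≥ Real.sqrt (∑ i, (a i) ^ 2)) ∨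
      (∑ i, a i * (if i ∈ K then (-1 : ℝ) else 1) ≥ Real.sqrt (∑ i, (a i) ^ 2)) := by
  set sJ := ∑ i ∈ J, a i with hsJ
  set sK := ∑ i ∈ K, a i with hsK
  set sC := ∑ i ∈ (J ∪ K)ᶜ, a i with hsC
  set q := ∑ i, (a i) ^ 2 with hq
  -- total sum decomposition
  have htot : ∑ i, a i = sJ + sK + sC := by
    rw [hsJ, hsK, hsC, ← Finset.sum_union hJK, Finset.sum_add_sum_compl]
  have hqtot : q = (∑ i ∈ J, (a i) ^ 2) + (∑ i ∈ K, (a i) ^ 2)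
      + ∑ i ∈ (J ∪ K)ᶜ, (a i) ^ 2 := by
    rw [hq, ← Finset.sum_union hJK, Finset.sum_add_sum_compl]
  have hcross : ∑ i ∈ J, ∑ j ∈ K, a i * a j = sJ * sK := by
    rw [hsJ, hsK, Finset.sum_mul_sum]
  have hPJ := signsum_aux a J
  have hPK := signsum_aux a K
  have hJe := pairsum_aux a J
  have hKe := pairsum_aux a K
  have hCe := pairsum_aux a ((J ∪ K)ᶜ)
  -- key inequality: q ≤ sC^2 + (sJ - sK)^2
  have hkey : q ≤ sC ^ 2 + (sJ - sK) ^ 2 := by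
    rw [hcross] at h
    nlinarith [h, hJe, hKe, hCe, hqtot]
  have hsC0 : 0 ≤ sC := Finset.sum_nonneg fun i _ => ha0 i
  have hq0 : 0 ≤ q := Finset.sum_nonneg fun i _ => sq_nonneg _
  rcases le_total sJ sK with hle | hle
  · left
    have hP : ∑ i, a i * (if i ∈ J then (-1 : ℝ) else 1) = sC + sK - sJ := by
      rw [hPJ, htot]; ring
    rw [hP]
    have hP0 : (0 : ℝ) ≤ sC + sK - sJ := by rw [hP] at hJ0; exact hJ0
    have : q ≤ (sC + sK - sJ) ^ 2 := by nlinarith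
    calc Real.sqrt q ≤ Real.sqrt ((sC + sK - sJ) ^ 2) := Real.sqrt_le_sqrt this
      _ = sC + sK - sJ := by rw [Real.sqrt_sq hP0]
  · right
    have hP : ∑ i, a i * (if i ∈ K then (-1 : ℝ) else 1) = sC + sJ - sK := by
      rw [hPK, htot]; ring
    rw [hP]
    have hP0 : (0 : ℝ) ≤ sC + sJ - sK := by rw [hP] at hK0; exact hK0
    have : q ≤ (sC + sJ - sK) ^ 2 := by nlinarith
    calc Real.sqrt q ≤ Real.sqrt ((sC + sJ - sK) ^ 2) := Real.sqrt_le_sqrt this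
      _ = sC + sJ - sK := by rw [Real.sqrt_sq hP0]
end

section
/- Let a ∈ ℝ^7 with a_1 ≥ a_2 ≥ ... ≥ a_7 ≥ 0. Then at least one of the sign sums a·(2)_7, a·(3,4)_7, a·(5,6,7)_7 is ≥ ‖a‖, where (J)_7 denotes the sign vector in {-1,1}^7 with -1 exactly on J. -/
set_option maxHeartbeats 1000000


open Finset

/-- Lemma 3.3: if `a_1 ≥ … ≥ a_7 ≥ 0`, then at least one of the sign sums
`a·(2)_7`, `a·(3,4)_7`, `a·(5,6,7)_7` is at least `‖a‖`.  (Indices are 1-based in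
the paper; here `(2)_7 = {1}`, `(3,4)_7 = {2,3}`, `(5,6,7)_7 = {4,5,6}` in 0-based
`Fin 7` indexing.) -/
theorem stmt_9 (a : Fin 7 → ℝ) (ha : Antitone a) (ha0 : ∀ i, 0 ≤ a i) :
    (∑ i, a i * (if i ∈ ({1} : Finset (Fin 7)) then (-1 : ℝ) else 1)
        ≥ Real.sqrt (∑ i, (a i) ^ 2)) ∨
    (∑ i, a i * (if i ∈ ({2, 3} : Finset (Fin 7)) then (-1 : ℝ) else 1)
        ≥ Real.sqrt (∑ i, (a i) ^ 2)) ∨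
    (∑ i, a i * (if i ∈ ({4, 5, 6} : Finset (Fin 7)) then (-1 : ℝ) else 1)
        ≥ Real.sqrt (∑ i, (a i) ^ 2)) := by
  have h01 : a 1 ≤ a 0 := ha (by decide)
  have h12 : a 2 ≤ a 1 := ha (by decide)
  have h23 : a 3 ≤ a 2 := ha (by decide)
  have h34 : a 4 ≤ a 3 := ha (by decide)
  have h45 : a 5 ≤ a 4 := ha (by decide)
  have h56 : a 6 ≤ a 5 := ha (by decide)
  have h6 : 0 ≤ a 6 := ha0 6
  set N : ℝ := ∑ i, (a i) ^ 2 with hN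
  have hNval : N = (a 0)^2 + (a 1)^2 + (a 2)^2 + (a 3)^2 + (a 4)^2 + (a 5)^2 + (a 6)^2 := by
    simp [hN, Fin.sum_univ_seven]
  set S1 : ℝ := ∑ i, a i * (if i ∈ ({1} : Finset (Fin 7)) then (-1 : ℝ) else 1) with hS1
  set S2 : ℝ := ∑ i, a i * (if i ∈ ({2, 3} : Finset (Fin 7)) then (-1 : ℝ) else 1) with hS2
  set S3 : ℝ := ∑ i, a i * (if i ∈ ({4, 5, 6} : Finset (Fin 7)) then (-1 : ℝ) else 1) with hS3
  have hS1v : S1 = a 0 - a 1 + a 2 + a 3 + a 4 + a 5 + a 6 := by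
    simp [hS1, Fin.sum_univ_seven]
    ring
  have hS2v : S2 = a 0 + a 1 - a 2 - a 3 + a 4 + a 5 + a 6 := by
    simp [hS2, Fin.sum_univ_seven]
    ring
  have hS3v : S3 = a 0 + a 1 + a 2 + a 3 - a 4 - a 5 - a 6 := by
    simp [hS3, Fin.sum_univ_seven]
    ring
  have hS1pos : 0 ≤ S1 := by rw [hS1v]; nlinarith [ha0 2, ha0 3, ha0 4, ha0 5]
  have hS2pos : 0 ≤ S2 := by rw [hS2v]; nlinarith [ha0 4, ha0 5]
  have hS3pos : 0 ≤ S3 := by rw [hS3v]; nlinarith [ha0 3]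
  have key : 3 * N ≤ S1^2 + S2^2 + S3^2 := by
    rw [hNval, hS1v, hS2v, hS3v]
    nlinarith [ha0 0, ha0 1, ha0 2, ha0 3, ha0 4, ha0 5, ha0 6, sq_nonneg (a 0 - a 1),
      sq_nonneg (a 1 - a 2), sq_nonneg (a 2 - a 3), sq_nonneg (a 3 - a 4),
      sq_nonneg (a 4 - a 5), sq_nonneg (a 5 - a 6),
      mul_nonneg (sub_nonneg.2 h01) (sub_nonneg.2 h12),
      mul_nonneg (sub_nonneg.2 h12) (sub_nonneg.2 h23),
      mul_nonneg (sub_nonneg.2 h23) (sub_nonneg.2 h34),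
      mul_nonneg (sub_nonneg.2 h34) (sub_nonneg.2 h45),
      mul_nonneg (sub_nonneg.2 h45) (sub_nonneg.2 h56),
      mul_nonneg (sub_nonneg.2 h56) h6]
  by_contra hcon
  push_neg at hcon
  obtain ⟨c1, c2, c3⟩ := hcon
  have hNnonneg : 0 ≤ N := Finset.sum_nonneg fun i _ => sq_nonneg _
  have hsq : Real.sqrt N ^ 2 = N := Real.sq_sqrt hNnonneg
  have b1 : S1^2 < N := by nlinarith [c1]
  have b2 : S2^2 < N := by nlinarith [c2]
  have b3 : S3^2 < N := by nlinarith [c3]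
  linarith
end

section
/- For every a ∈ ℝ^5 with all coordinates nonzero, P(|a_1ε_1 + ... + a_5ε_5| > ‖a‖) ≥ 1/4, and equality is attained for a = (2,2,1,1,1); hence G_5' = inf over such a of P(|a·ε| > ‖a‖) equals 1/4. -/
open Finset
open scoped Classical

lemma key_sqrt (y x : ℝ) (hy : 0 ≤ y) (h : y < x^2) : Real.sqrt y < |x| := by
  rw [← Real.sqrt_sq_eq_abs]; exact Real.sqrt_lt_sqrt hy h

lemma rsign_not (b : Bool) : rsign (!b) = - rsign b := by
  cases b <;> simp [rsign]

set_option maxHeartbeats 3000000 in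
lemma core (c : Fin 5 → ℝ) (h0 : 0 < c 0) (h01 : c 0 ≤ c 1) (h12 : c 1 ≤ c 2)
    (h23 : c 2 ≤ c 3) (h34 : c 3 ≤ c 4) :
    8 ≤ (univ.filter fun s : Fin 5 → Bool =>
      |∑ i, c i * rsign (s i)| > Real.sqrt (∑ i, c i ^ 2)).card := by
  have h1 : 0 < c 1 := lt_of_lt_of_le h0 h01
  have h2 : 0 < c 2 := lt_of_lt_of_le h1 h12
  have h3 : 0 < c 3 := lt_of_lt_of_le h2 h23
  have h4 : 0 < c 4 := lt_of_lt_of_le h3 h34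
  have hmem : ∀ v : Fin 5 → Bool,
      (∑ i, c i ^ 2) < (∑ i, c i * rsign (v i))^2 →
      v ∈ (univ.filter fun s : Fin 5 → Bool =>
        |∑ i, c i * rsign (s i)| > Real.sqrt (∑ i, c i ^ 2)) := by
    intro v hv
    simp only [mem_filter, mem_univ, true_and, gt_iff_lt]
    exact key_sqrt _ _ (by positivity) hv
  by_cases hA : (∑ i, c i ^ 2) < (c 0 + c 1 - c 2 + c 3 + c 4)^2
  all_goals simp only [Fin.sum_univ_five] at hA
  · have hsub : ({![true,true,true,true,true], ![false,false,false,false,false],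
        ![false,true,true,true,true], ![true,false,false,false,false],
        ![true,false,true,true,true], ![false,true,false,false,false],
        ![true,true,false,true,true], ![false,false,true,false,false]} :
        Finset (Fin 5 → Bool)) ⊆ (univ.filter fun s : Fin 5 → Bool =>
        |∑ i, c i * rsign (s i)| > Real.sqrt (∑ i, c i ^ 2)) := by
      intro v hv
      fin_cases hv <;>
        refine hmem _ ?_ <;>
        simp only [Fin.sum_univ_five, rsign, Matrix.cons_val_zero, Matrix.cons_val_one,
          Matrix.head_cons, Matrix.cons_val_two, Matrix.tail_cons, Matrix.cons_val_three,
          Matrix.cons_val_four, if_true, if_false, Bool.false_eq_true, ite_false, ite_true] <;>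
        nlinarith [mul_pos h0 h1, mul_pos h0 h2, mul_pos h0 h3, mul_pos h0 h4,
          mul_pos h1 h2, mul_pos h1 h3, mul_pos h1 h4, mul_pos h2 h3, mul_pos h2 h4,
          mul_pos h3 h4, mul_nonneg (sub_nonneg.2 h01) (le_of_lt h2),
          mul_nonneg (sub_nonneg.2 h01) (le_of_lt h3),
          mul_nonneg (sub_nonneg.2 h01) (le_of_lt h4),
          mul_nonneg (sub_nonneg.2 h12) (le_of_lt h3),
          mul_nonneg (sub_nonneg.2 h12) (le_of_lt h4),
          mul_nonneg (sub_nonneg.2 h23) (le_of_lt h4), hA]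
    calc (8:ℕ) = ({![true,true,true,true,true], ![false,false,false,false,false],
        ![false,true,true,true,true], ![true,false,false,false,false],
        ![true,false,true,true,true], ![false,true,false,false,false],
        ![true,true,false,true,true], ![false,false,true,false,false]} :
        Finset (Fin 5 → Bool)).card := by decide
      _ ≤ _ := Finset.card_le_card hsub
  · push_neg at hA
    have hB : c 0 ^ 2 + c 1 ^ 2 + c 2 ^ 2 + c 3 ^ 2 + c 4 ^ 2
        < (- c 0 - c 1 + c 2 + c 3 + c 4)^2 := by
      nlinarith [mul_nonneg (sub_nonneg.2 h23) (sub_nonneg.2 (h12.trans h23)),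
        mul_nonneg (sub_nonneg.2 h34) (sub_nonneg.2 ((h12.trans h23).trans h34)),
        mul_nonneg (sub_nonneg.2 (le_trans h01 h12)) (sub_nonneg.2 h12),
        mul_pos h0 h1, mul_pos h0 h2, mul_pos h1 h2,
        mul_nonneg (mul_nonneg (sub_nonneg.2 h23) h0.le) h1.le,
        mul_nonneg (mul_nonneg (sub_nonneg.2 h34) h0.le) h1.le]
    have hsub : ({![true,true,true,true,true], ![false,false,false,false,false],
        ![false,true,true,true,true], ![true,false,false,false,false],
        ![true,false,true,true,true], ![false,true,false,false,false],
        ![false,false,true,true,true], ![true,true,false,false,false]} :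
        Finset (Fin 5 → Bool)) ⊆ (univ.filter fun s : Fin 5 → Bool =>
        |∑ i, c i * rsign (s i)| > Real.sqrt (∑ i, c i ^ 2)) := by
      intro v hv
      fin_cases hv <;>
        refine hmem _ ?_ <;>
        simp only [Fin.sum_univ_five, rsign, Matrix.cons_val_zero, Matrix.cons_val_one,
          Matrix.head_cons, Matrix.cons_val_two, Matrix.tail_cons, Matrix.cons_val_three,
          Matrix.cons_val_four, if_true, if_false, Bool.false_eq_true, ite_false, ite_true]
      case _ => nlinarith [mul_pos h0 h1, mul_pos h2 h3, mul_pos h2 h4, mul_pos h3 h4]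
      case _ => nlinarith [mul_pos h0 h1, mul_pos h2 h3, mul_pos h2 h4, mul_pos h3 h4]
      case _ => nlinarith [mul_pos h3 h4, mul_pos h2 h4, mul_pos h2 h3,
          mul_nonneg (sub_nonneg.2 h01) h2.le, mul_nonneg (sub_nonneg.2 h01) h3.le,
          mul_nonneg (sub_nonneg.2 h01) h4.le]
      case _ => nlinarith [mul_pos h3 h4, mul_pos h2 h4, mul_pos h2 h3,
          mul_nonneg (sub_nonneg.2 h01) h2.le, mul_nonneg (sub_nonneg.2 h01) h3.le,
          mul_nonneg (sub_nonneg.2 h01) h4.le]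
      case _ => nlinarith [mul_pos h3 h4, mul_pos h2 h4,
          mul_nonneg (sub_nonneg.2 h12) h3.le, mul_nonneg (sub_nonneg.2 h12) h4.le,
          mul_nonneg (sub_nonneg.2 (h01.trans h12)) h0.le,
          mul_nonneg (sub_nonneg.2 h12) h0.le, mul_pos h0 h3, mul_pos h0 h4]
      case _ => nlinarith [mul_pos h3 h4, mul_pos h2 h4,
          mul_nonneg (sub_nonneg.2 h12) h3.le, mul_nonneg (sub_nonneg.2 h12) h4.le,
          mul_nonneg (sub_nonneg.2 (h01.trans h12)) h0.le,
          mul_nonneg (sub_nonneg.2 h12) h0.le, mul_pos h0 h3, mul_pos h0 h4]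
      case _ => linarith [hB]
      case _ =>
        nlinarith [hB, sq_nonneg (c 0 + c 1 - c 2 - c 3 - c 4),
          sq_nonneg (-c 0 - c 1 + c 2 + c 3 + c 4), sq_abs (c 0 + c 1 - c 2 - c 3 - c 4)]
    calc (8:ℕ) = ({![true,true,true,true,true], ![false,false,false,false,false],
        ![false,true,true,true,true], ![true,false,false,false,false],
        ![true,false,true,true,true], ![false,true,false,false,false],
        ![false,false,true,true,true], ![true,true,false,false,false]} :
        Finset (Fin 5 → Bool)).card := by decide
      _ ≤ _ := Finset.card_le_card hsub

lemma transfer (a : Fin 5 → ℝ) (ha : ∀ i, a i ≠ 0) :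
    (univ.filter fun s : Fin 5 → Bool =>
      |∑ i, a i * rsign (s i)| > Real.sqrt (∑ i, a i ^ 2)).card
    = (univ.filter fun s : Fin 5 → Bool =>
      |∑ i, (fun i => |a (Tuple.sort (fun j => |a j|) i)|) i * rsign (s i)|
        > Real.sqrt (∑ i, ((fun i => |a (Tuple.sort (fun j => |a j|) i)|) i) ^ 2)).card := by
  set σ := Tuple.sort (fun j => |a j|) with hσ
  set c : Fin 5 → ℝ := fun i => |a (σ i)| with hc
  have hsum2 : (∑ i, a i ^ 2) = ∑ i, c i ^ 2 := by
    rw [← Equiv.sum_comp σ (fun j => a j ^ 2)]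
    exact Finset.sum_congr rfl fun i _ => (sq_abs _).symm
  have key : ∀ t : Fin 5 → Bool,
      ∑ i, c i * rsign (if 0 < a (σ i) then t (σ i) else !(t (σ i)))
        = ∑ j, a j * rsign (t j) := by
    intro t
    rw [← Equiv.sum_comp σ (fun j => a j * rsign (t j))]
    refine Finset.sum_congr rfl fun i _ => ?_
    by_cases h : 0 < a (σ i)
    · simp [hc, abs_of_pos h, h]
    · have h' : a (σ i) < 0 := lt_of_le_of_ne (not_lt.1 h) (ha _)
      simp only [h, if_false, hc, abs_of_neg h', rsign_not]
      ring
  refine Finset.card_nbij'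
    (fun t => fun i => if 0 < a (σ i) then t (σ i) else !(t (σ i)))
    (fun s => fun j => if 0 < a j then s (σ.symm j) else !(s (σ.symm j)))
    ?_ ?_ ?_ ?_
  · intro t ht
    simp only [Finset.mem_coe, mem_filter, mem_univ, true_and, gt_iff_lt] at ht ⊢
    rw [key t, ← hsum2]; exact ht
  · intro s hs
    simp only [Finset.mem_coe, mem_filter, mem_univ, true_and, gt_iff_lt] at hs ⊢
    have e1 : (∑ x, a x * rsign (if 0 < a x then s (σ.symm x) else !(s (σ.symm x))))
        = ∑ i, c i * rsign (s i) := by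
      rw [← key (fun j => if 0 < a j then s (σ.symm j) else !(s (σ.symm j)))]
      refine Finset.sum_congr rfl fun i _ => ?_
      by_cases h : 0 < a (σ i) <;> simp [h]
    rw [e1, hsum2]; exact hs
  · intro t _
    funext j
    rcases Equiv.surjective σ j with ⟨i, rfl⟩
    by_cases h : 0 < a (σ i) <;> simp [h]
  · intro s _
    funext i
    by_cases h : 0 < a (σ i) <;> simp [h]

lemma part1 (a : Fin 5 → ℝ) (ha : ∀ i, a i ≠ 0) :
    prob 5 (fun s => |∑ i, a i * rsign (s i)| > Real.sqrt (∑ i, (a i) ^ 2)) ≥ 1 / 4 := by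
  set σ := Tuple.sort (fun j => |a j|) with hσ
  have hm := Tuple.monotone_sort (fun j => |a j|)
  have hcard : 8 ≤ (univ.filter fun s : Fin 5 → Bool =>
      |∑ i, a i * rsign (s i)| > Real.sqrt (∑ i, a i ^ 2)).card := by
    rw [transfer a ha]
    refine core _ (abs_pos.2 (ha _)) ?_ ?_ ?_ ?_ <;>
      exact hm (by decide)
  unfold prob
  rw [ge_iff_le, div_le_div_iff₀ (by norm_num) (by positivity)]
  have : (8:ℝ) ≤ ((univ.filter fun s : Fin 5 → Bool =>
      |∑ i, a i * rsign (s i)| > Real.sqrt (∑ i, a i ^ 2)).card : ℝ) := by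
    exact_mod_cast hcard
  norm_num
  linarith

set_option maxHeartbeats 2000000 in
lemma part2 :
    prob 5 (fun s => |∑ i, (![2, 2, 1, 1, 1] : Fin 5 → ℝ) i * rsign (s i)|
        > Real.sqrt (∑ i, ((![2, 2, 1, 1, 1] : Fin 5 → ℝ) i) ^ 2)) = 1 / 4 := by
  have h3 : (3:ℝ) < Real.sqrt 11 := by
    have := Real.lt_sqrt (x := 3) (y := 11) (by norm_num)
    rw [this]; norm_num
  have h5 : Real.sqrt 11 < 5 := by
    have := Real.sqrt_lt' (x := 11) (y := 5) (by norm_num)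
    rw [this]; norm_num
  have harg : (∑ i, ((![2, 2, 1, 1, 1] : Fin 5 → ℝ) i) ^ 2) = 11 := by
    simp [Fin.sum_univ_five]; norm_num
  have hL : (univ.filter fun s : Fin 5 → Bool =>
      |∑ i, (![2, 2, 1, 1, 1] : Fin 5 → ℝ) i * rsign (s i)|
        > Real.sqrt (∑ i, ((![2, 2, 1, 1, 1] : Fin 5 → ℝ) i) ^ 2))
      = ({![true,true,true,true,true], ![true,true,false,true,true],
          ![true,true,true,false,true], ![true,true,true,true,false],
          ![false,false,false,false,false], ![false,false,true,false,false],
          ![false,false,false,true,false], ![false,false,false,false,true]} :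
          Finset (Fin 5 → Bool)) := by
    ext s
    obtain ⟨b0, b1, b2, b3, b4, rfl⟩ : ∃ b0 b1 b2 b3 b4, s = ![b0,b1,b2,b3,b4] :=
      ⟨s 0, s 1, s 2, s 3, s 4, by funext i; fin_cases i <;> rfl⟩
    rw [mem_filter, harg]
    simp only [mem_univ, true_and, gt_iff_lt, Fin.sum_univ_five]
    cases b0 <;> cases b1 <;> cases b2 <;> cases b3 <;> cases b4 <;>
      simp only [rsign, Matrix.cons_val_zero, Matrix.cons_val_one, Matrix.head_cons,
        Matrix.cons_val_two, Matrix.tail_cons, Matrix.cons_val_three, Matrix.cons_val_four,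
        if_true, if_false, Bool.false_eq_true, ite_false, ite_true] <;>
      first
      | (refine iff_of_true ?_ (by decide);
         rw [lt_abs]; first | (left; norm_num; linarith) | (right; norm_num; linarith))
      | (refine iff_of_false ?_ (by decide);
         rw [not_lt]; refine le_trans (by norm_num) h3.le)
  unfold prob
  rw [hL]
  norm_num

/-- For every `a ∈ ℝ^5` with all coordinates nonzero, `P(|a·ε| > ‖a‖) ≥ 1 / 4`,
with equality for `a = ![2, 2, 1, 1, 1]`; hence `G_5' = 1 / 4`. -/
theorem stmt_12 :
    (∀ a : Fin 5 → ℝ, (∀ i, a i ≠ 0) →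
        prob 5 (fun s => |∑ i, a i * rsign (s i)| > Real.sqrt (∑ i, (a i) ^ 2)) ≥ 1 / 4) ∧
    prob 5 (fun s => |∑ i, (![2, 2, 1, 1, 1] : Fin 5 → ℝ) i * rsign (s i)|
        > Real.sqrt (∑ i, ((![2, 2, 1, 1, 1] : Fin 5 → ℝ) i) ^ 2)) = 1 / 4 ∧
    sInf {p : ℝ | ∃ a : Fin 5 → ℝ, (∀ i, a i ≠ 0) ∧
        p = prob 5 (fun s => |∑ i, a i * rsign (s i)| > Real.sqrt (∑ i, (a i) ^ 2))}
      = 1 / 4 := by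
  have hne : ∀ i, (![2, 2, 1, 1, 1] : Fin 5 → ℝ) i ≠ 0 := by
    intro i; fin_cases i <;> norm_num
  refine ⟨part1, part2, ?_⟩
  have hmem : (1/4 : ℝ) ∈ {p : ℝ | ∃ a : Fin 5 → ℝ, (∀ i, a i ≠ 0) ∧
      p = prob 5 (fun s => |∑ i, a i * rsign (s i)| > Real.sqrt (∑ i, (a i) ^ 2))} :=
    ⟨![2, 2, 1, 1, 1], hne, part2.symm⟩
  refine le_antisymm (csInf_le ⟨1/4, ?_⟩ hmem) (le_csInf ⟨_, hmem⟩ ?_)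
  · rintro p ⟨a, ha, rfl⟩
    exact part1 a ha
  · rintro p ⟨a, ha, rfl⟩
    exact part1 a ha
end

section
/- For every a ∈ ℝ^4 with all coordinates nonzero, P(|a_1ε_1 + ... + a_4ε_4| > ‖a‖) ≥ 1/8, and equality holds for a = (1,1,1,1); hence G_4' = 1/8. -/
open Finset
open scoped Classical

lemma mul_rsign_pos (a : ℝ) (ha : a ≠ 0) : a * rsign (decide (0 < a)) = |a| := by
  rcases lt_or_gt_of_ne ha with h | h
  · rw [decide_eq_false (not_lt.mpr h.le)]
    simp [rsign, abs_of_neg h]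
  · rw [decide_eq_true h]
    simp [rsign, abs_of_pos h]

lemma sqrt_lt_sum_abs (a : Fin 4 → ℝ) (ha : ∀ i, a i ≠ 0) :
    Real.sqrt (∑ i, (a i) ^ 2) < ∑ i, |a i| := by
  have h0 := abs_pos.mpr (ha 0)
  have h1 := abs_pos.mpr (ha 1)
  have h2 := abs_pos.mpr (ha 2)
  have h3 := abs_pos.mpr (ha 3)
  rw [Fin.sum_univ_four, Fin.sum_univ_four]
  rw [Real.sqrt_lt' (by positivity)]
  nlinarith [sq_abs (a 0), sq_abs (a 1), sq_abs (a 2), sq_abs (a 3),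
    mul_pos h0 h1, mul_pos h0 h2, mul_pos h0 h3, mul_pos h1 h2, mul_pos h1 h3, mul_pos h2 h3]

lemma lower (a : Fin 4 → ℝ) (ha : ∀ i, a i ≠ 0) :
    prob 4 (fun s => |∑ i, a i * rsign (s i)| > Real.sqrt (∑ i, (a i) ^ 2)) ≥ 1 / 8 := by
  set s₀ : Fin 4 → Bool := fun i => decide (0 < a i) with hs₀
  set s₁ : Fin 4 → Bool := fun i => !(s₀ i) with hs₁
  have key := sqrt_lt_sum_abs a ha
  have hsum0 : ∑ i, a i * rsign (s₀ i) = ∑ i, |a i| := by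
    apply Finset.sum_congr rfl
    intro i _
    exact mul_rsign_pos (a i) (ha i)
  have hsum1 : ∑ i, a i * rsign (s₁ i) = -(∑ i, |a i|) := by
    rw [← Finset.sum_neg_distrib]
    apply Finset.sum_congr rfl
    intro i _
    rw [hs₁]
    simp only [rsign_not, mul_neg]
    rw [mul_rsign_pos (a i) (ha i)]
  have habs : (0:ℝ) ≤ ∑ i, |a i| := Finset.sum_nonneg fun i _ => abs_nonneg _
  have hm0 : s₀ ∈ Finset.univ.filter fun s =>
      |∑ i, a i * rsign (s i)| > Real.sqrt (∑ i, (a i) ^ 2) := by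
    simp only [Finset.mem_filter, Finset.mem_univ, true_and]
    rw [hsum0, abs_of_nonneg habs]; exact key
  have hm1 : s₁ ∈ Finset.univ.filter fun s =>
      |∑ i, a i * rsign (s i)| > Real.sqrt (∑ i, (a i) ^ 2) := by
    simp only [Finset.mem_filter, Finset.mem_univ, true_and]
    rw [hsum1, abs_neg, abs_of_nonneg habs]; exact key
  have hne : s₀ ≠ s₁ := by
    intro h
    have := congrFun h 0
    simp [hs₁] at this
  have hcard : 1 < (Finset.univ.filter fun s : Fin 4 → Bool =>
      |∑ i, a i * rsign (s i)| > Real.sqrt (∑ i, (a i) ^ 2)).card :=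
    Finset.one_lt_card.mpr ⟨s₀, hm0, s₁, hm1, hne⟩
  have : (2:ℝ) ≤ ((Finset.univ.filter fun s : Fin 4 → Bool =>
      |∑ i, a i * rsign (s i)| > Real.sqrt (∑ i, (a i) ^ 2)).card : ℝ) := by
    exact_mod_cast hcard
  unfold prob
  rw [ge_iff_le, div_le_div_iff₀ (by norm_num) (by positivity)]
  norm_num
  linarith

lemma equality :
    prob 4 (fun s => |∑ i, (![1, 1, 1, 1] : Fin 4 → ℝ) i * rsign (s i)|
        > Real.sqrt (∑ i, ((![1, 1, 1, 1] : Fin 4 → ℝ) i) ^ 2)) = 1 / 8 := by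
  have hs : Real.sqrt (∑ i, ((![1, 1, 1, 1] : Fin 4 → ℝ) i) ^ 2) = 2 := by
    rw [Fin.sum_univ_four]
    norm_num
    rw [show (![1, 1, 1, 1] : Fin 4 → ℝ) 2 = 1 from rfl, show (![1, 1, 1, 1] : Fin 4 → ℝ) 3 = 1 from rfl]
    norm_num
  have hiff : ∀ s : Fin 4 → Bool,
      (|∑ i, (![1, 1, 1, 1] : Fin 4 → ℝ) i * rsign (s i)|
        > Real.sqrt (∑ i, ((![1, 1, 1, 1] : Fin 4 → ℝ) i) ^ 2)) ↔
      (s = (fun _ => true) ∨ s = (fun _ => false)) := by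
    intro s
    have hfun : ∀ b : Bool, (s = fun _ => b) ↔ (s 0 = b ∧ s 1 = b ∧ s 2 = b ∧ s 3 = b) := by
      intro b
      constructor
      · intro h; subst h; exact ⟨rfl, rfl, rfl, rfl⟩
      · rintro ⟨h0, h1, h2, h3⟩; funext i; fin_cases i <;> assumption
    rw [hs, Fin.sum_univ_four, hfun, hfun]
    simp only [Matrix.cons_val_zero, Matrix.cons_val_one, Matrix.head_cons,
      Matrix.cons_val_two, Matrix.tail_cons, Matrix.cons_val_three, one_mul]
    rcases Bool.eq_false_or_eq_true (s 0) with h0 | h0 <;>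
    rcases Bool.eq_false_or_eq_true (s 1) with h1 | h1 <;>
    rcases Bool.eq_false_or_eq_true (s 2) with h2 | h2 <;>
    rcases Bool.eq_false_or_eq_true (s 3) with h3 | h3 <;>
      simp [h0, h1, h2, h3, rsign] <;> norm_num
  have hset : (Finset.univ.filter fun s : Fin 4 → Bool =>
      |∑ i, (![1, 1, 1, 1] : Fin 4 → ℝ) i * rsign (s i)|
        > Real.sqrt (∑ i, ((![1, 1, 1, 1] : Fin 4 → ℝ) i) ^ 2))
      = {(fun _ => true), (fun _ => false)} := by
    ext s
    simp only [Finset.mem_filter, Finset.mem_univ, true_and, Finset.mem_insert,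
      Finset.mem_singleton]
    exact hiff s
  unfold prob
  rw [hset, Finset.card_pair (by intro h; have := congrFun h 0; simp at this)]
  norm_num

/-- For every `a ∈ ℝ^4` with all coordinates nonzero, `P(|a·ε| > ‖a‖) ≥ 1 / 8`,
with equality for `a = ![1, 1, 1, 1]`; hence `G_4' = 1 / 8`. -/
theorem stmt_13 :
    (∀ a : Fin 4 → ℝ, (∀ i, a i ≠ 0) →
        prob 4 (fun s => |∑ i, a i * rsign (s i)| > Real.sqrt (∑ i, (a i) ^ 2)) ≥ 1 / 8) ∧
    prob 4 (fun s => |∑ i, (![1, 1, 1, 1] : Fin 4 → ℝ) i * rsign (s i)|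
        > Real.sqrt (∑ i, ((![1, 1, 1, 1] : Fin 4 → ℝ) i) ^ 2)) = 1 / 8 ∧
    sInf {p : ℝ | ∃ a : Fin 4 → ℝ, (∀ i, a i ≠ 0) ∧
        p = prob 4 (fun s => |∑ i, a i * rsign (s i)| > Real.sqrt (∑ i, (a i) ^ 2))}
      = 1 / 8 := by
  refine ⟨lower, equality, ?_⟩
  have hmem : (1/8 : ℝ) ∈ {p : ℝ | ∃ a : Fin 4 → ℝ, (∀ i, a i ≠ 0) ∧
      p = prob 4 (fun s => |∑ i, a i * rsign (s i)| > Real.sqrt (∑ i, (a i) ^ 2))} := by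
    exact ⟨![1,1,1,1], fun i => by fin_cases i <;> norm_num, equality.symm⟩
  have hlb : ∀ p ∈ {p : ℝ | ∃ a : Fin 4 → ℝ, (∀ i, a i ≠ 0) ∧
      p = prob 4 (fun s => |∑ i, a i * rsign (s i)| > Real.sqrt (∑ i, (a i) ^ 2))},
      (1/8 : ℝ) ≤ p := by
    rintro p ⟨a, ha, rfl⟩
    exact lower a ha
  exact le_antisymm (csInf_le ⟨1/8, hlb⟩ hmem) (le_csInf ⟨1/8, hmem⟩ hlb)
end

section
/- Assume that for all n, all unit vectors a ∈ ℝ^n, and all δ > 0, P(a·ε > δ) + P(a·ε > 1/δ) ≤ 1/2. Then for any n and any a ∈ ℝ^n with ‖a‖ = 1, ordering the 2^n sign sums ±a_1 ± ... ± a_n non-decreasingly as s_{-2^{n-1}} ≤ ... ≤ s_{-1} ≤ s_1 ≤ ... ≤ s_{2^{n-1}}, one has s_k · s_{2^{n-1}+1-k} ≤ 1 for all k = 1,...,2^{n-1}. -/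
open Finset
open scoped Classical

/-- Assume `P(a·ε > δ) + P(a·ε > 1/δ) ≤ 1/2` for all `n`, unit `a ∈ ℝ^n`, `δ > 0`.
Then for any `n ≥ 1` and unit `a ∈ ℝ^n`, if `g 0 ≤ g 1 ≤ ⋯ ≤ g (2^n - 1)` is a
non-decreasing enumeration of the `2^n` sign sums `±a_1 ± ⋯ ± a_n` (so that, in the
paper's notation, `s_k = g (2^{n-1} + k - 1)` and `s_{2^{n-1}+1-k} = g (2^n - k)`),
then `s_k · s_{2^{n-1}+1-k} ≤ 1` for all `k = 1, …, 2^{n-1}`. -/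
theorem stmt_19
    (H : ∀ n : ℕ, ∀ a : Fin n → ℝ, Real.sqrt (∑ i, (a i) ^ 2) = 1 → ∀ δ : ℝ, 0 < δ →
      prob n (fun s => ∑ i, a i * rsign (s i) > δ) +
        prob n (fun s => ∑ i, a i * rsign (s i) > 1 / δ) ≤ 1 / 2) :
    ∀ n : ℕ, 1 ≤ n → ∀ a : Fin n → ℝ, Real.sqrt (∑ i, (a i) ^ 2) = 1 →
    ∀ g : ℕ → ℝ,
      (∀ p q : ℕ, p ≤ q → q < 2 ^ n → g p ≤ g q) →
      (Multiset.map g (Multiset.range (2 ^ n)) =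
        Multiset.map (fun s : Fin n → Bool => ∑ i, a i * rsign (s i)) Finset.univ.val) →
      ∀ k : ℕ, 1 ≤ k → k ≤ 2 ^ (n - 1) →
        g (2 ^ (n - 1) + k - 1) * g (2 ^ n - k) ≤ 1 := by
  intro n hn a ha g gmono hmap k hk1 hk2
  obtain ⟨N, hN⟩ : ∃ N, 2 ^ (n - 1) = N := ⟨_, rfl⟩
  rw [hN] at hk2 ⊢
  have h2n : 2 ^ n = 2 * N := by
    rw [← hN, ← pow_succ']
    congr 1
    omega
  -- transfer of counts
  have transfer : ∀ p : ℝ → Prop,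
      ((Finset.range (2 ^ n)).filter (fun j => p (g j))).card
        = ((Finset.univ : Finset (Fin n → Bool)).filter
            (fun s => p (∑ i, a i * rsign (s i)))).card := by
    intro p
    have h := congrArg (Multiset.countP p) hmap
    rw [Multiset.countP_map, Multiset.countP_map] at h
    have h1 : ((Finset.range (2 ^ n)).filter (fun j => p (g j))).card
        = Multiset.card ((Multiset.range (2 ^ n)).filter (fun j => p (g j))) := by
      rfl
    have h2 : ((Finset.univ : Finset (Fin n → Bool)).filter
        (fun s => p (∑ i, a i * rsign (s i)))).card
        = Multiset.card ((Finset.univ : Finset (Fin n → Bool)).val.filter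
            (fun s => p (∑ i, a i * rsign (s i)))) := rfl
    rw [h1, h2, h]
  -- symmetry: negating all signs negates the sum
  have hnegsum : ∀ s : Fin n → Bool,
      (∑ i, a i * rsign ((fun i => !(s i)) i)) = -(∑ i, a i * rsign (s i)) := by
    intro s
    rw [← Finset.sum_neg_distrib]
    refine Finset.sum_congr rfl fun i _ => ?_
    cases h : s i <;> simp [rsign, h]
  -- #{j : g j ≥ 0} ≥ N
  have hnonneg_g : N ≤ ((Finset.range (2 ^ n)).filter (fun j => 0 ≤ g j)).card := by
    rw [transfer (fun z => 0 ≤ z)]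
    have hcard_eq :
        ((Finset.univ : Finset (Fin n → Bool)).filter
            (fun s => 0 ≤ ∑ i, a i * rsign (s i))).card
        = ((Finset.univ : Finset (Fin n → Bool)).filter
            (fun s => (∑ i, a i * rsign (s i)) ≤ 0)).card := by
      apply Finset.card_bij' (fun s _ => fun i => !(s i)) (fun s _ => fun i => !(s i))
      · intro s hs
        simp only [Finset.mem_filter, Finset.mem_univ, true_and] at hs ⊢
        rw [hnegsum s]
        linarith
      · intro s hs
        simp only [Finset.mem_filter, Finset.mem_univ, true_and] at hs ⊢
        rw [hnegsum s]
        linarith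
      · intro s _; funext i; simp
      · intro s _; funext i; simp
    have hcover : (Finset.univ : Finset (Fin n → Bool)) ⊆
        (Finset.univ.filter (fun s => 0 ≤ ∑ i, a i * rsign (s i))) ∪
        (Finset.univ.filter (fun s => (∑ i, a i * rsign (s i)) ≤ 0)) := by
      intro s _
      rcases le_total 0 (∑ i, a i * rsign (s i)) with h | h
      · exact Finset.mem_union_left _ (by simpa using h)
      · exact Finset.mem_union_right _ (by simpa using h)
    have hle := Finset.card_le_card hcover
    have hu := Finset.card_union_le
        ((Finset.univ : Finset (Fin n → Bool)).filter (fun s => 0 ≤ ∑ i, a i * rsign (s i)))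
        ((Finset.univ : Finset (Fin n → Bool)).filter (fun s => (∑ i, a i * rsign (s i)) ≤ 0))
    have hcu : (Finset.univ : Finset (Fin n → Bool)).card = 2 ^ n := by
      simp [Finset.card_univ]
    linarith
  -- hence g p ≥ 0 for N ≤ p < 2^n
  have hgpos : ∀ p : ℕ, N ≤ p → p < 2 ^ n → 0 ≤ g p := by
    intro p hp1 hp2
    by_contra hneg
    push_neg at hneg
    have hsub : ((Finset.range (2 ^ n)).filter (fun j => 0 ≤ g j)) ⊆
        Finset.Ico (p + 1) (2 ^ n) := by
      intro j hj
      simp only [Finset.mem_filter, Finset.mem_range] at hj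
      simp only [Finset.mem_Ico]
      refine ⟨?_, hj.1⟩
      by_contra hjp
      push_neg at hjp
      have := gmono j p (Nat.lt_succ_iff.mp hjp) hp2
      linarith [hj.2]
    have h1 := Finset.card_le_card hsub
    rw [Nat.card_Ico] at h1
    omega
  -- positions
  have hp1 : N ≤ N + k - 1 := by omega
  have hp1' : N + k - 1 < 2 ^ n := by omega
  have hp2 : N ≤ 2 ^ n - k := by omega
  have hp2' : 2 ^ n - k < 2 ^ n := by omega
  obtain ⟨x, hx⟩ : ∃ x, g (N + k - 1) = x := ⟨_, rfl⟩
  obtain ⟨y, hy⟩ : ∃ y, g (2 ^ n - k) = y := ⟨_, rfl⟩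
  rw [hx, hy]
  have hx0 : 0 ≤ x := hx ▸ hgpos _ hp1 hp1'
  have hy0 : 0 ≤ y := hy ▸ hgpos _ hp2 hp2'
  by_contra hcon
  push_neg at hcon
  have hxpos : 0 < x := by
    rcases hx0.lt_or_eq with h | h
    · exact h
    · exfalso; rw [← h] at hcon; simp at hcon; linarith
  have hypos : 0 < y := by
    rcases hy0.lt_or_eq with h | h
    · exact h
    · exfalso; rw [← h] at hcon; simp at hcon; linarith
  have hxy : 1 / x < y := by
    rw [div_lt_iff₀ hxpos]
    linarith [hcon]
  obtain ⟨δ, hδ⟩ : ∃ δ, (1 / x + y) / 2 = δ := ⟨_, rfl⟩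
  have hδpos : 0 < δ := by rw [← hδ]; positivity
  have hδy : δ < y := by rw [← hδ]; linarith
  have hδx : 1 / δ < x := by
    rw [div_lt_iff₀ hδpos]
    have h1x : 1 / x < δ := by rw [← hδ]; linarith
    have := (div_lt_iff₀ hxpos).mp h1x
    linarith
  -- lower bounds on counts
  have hc1 : k ≤ ((Finset.range (2 ^ n)).filter (fun j => g j > δ)).card := by
    have hsub : Finset.Ico (2 ^ n - k) (2 ^ n) ⊆
        (Finset.range (2 ^ n)).filter (fun j => g j > δ) := by
      intro j hj
      simp only [Finset.mem_Ico] at hj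
      simp only [Finset.mem_filter, Finset.mem_range]
      refine ⟨hj.2, ?_⟩
      have := gmono (2 ^ n - k) j hj.1 hj.2
      rw [hy] at this
      calc δ < y := hδy
        _ ≤ g j := this
    have := Finset.card_le_card hsub
    rw [Nat.card_Ico] at this
    omega
  have hc2 : N + 1 - k ≤ ((Finset.range (2 ^ n)).filter (fun j => g j > 1 / δ)).card := by
    have hsub : Finset.Ico (N + k - 1) (2 ^ n) ⊆
        (Finset.range (2 ^ n)).filter (fun j => g j > 1 / δ) := by
      intro j hj
      simp only [Finset.mem_Ico] at hj
      simp only [Finset.mem_filter, Finset.mem_range]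
      refine ⟨hj.2, ?_⟩
      have := gmono (N + k - 1) j hj.1 hj.2
      rw [hx] at this
      calc 1 / δ < x := hδx
        _ ≤ g j := this
    have := Finset.card_le_card hsub
    rw [Nat.card_Ico] at this
    omega
  have hsum : N + 1 ≤
      ((Finset.range (2 ^ n)).filter (fun j => g j > δ)).card +
      ((Finset.range (2 ^ n)).filter (fun j => g j > 1 / δ)).card := by
    omega
  -- apply H
  have hH := H n a ha δ hδpos
  unfold prob at hH
  have h2pos : (0:ℝ) < 2 ^ n := by positivity
  rw [← add_div, div_le_div_iff₀ h2pos (by norm_num : (0:ℝ) < 2)] at hH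
  have ht1 := transfer (fun z => z > δ)
  have ht2 := transfer (fun z => z > 1 / δ)
  rw [← ht1, ← ht2] at hH
  have hsumR : ((N:ℝ) + 1) ≤
      (((Finset.range (2 ^ n)).filter (fun j => g j > δ)).card : ℝ) +
      (((Finset.range (2 ^ n)).filter (fun j => g j > 1 / δ)).card : ℝ) := by
    exact_mod_cast hsum
  have h2nR : ((2:ℝ) ^ n) = 2 * N := by exact_mod_cast h2n
  rw [h2nR] at hH
  linarith
end
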